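/- Let I and A be finite nonempty sets, let μ : I → ℝ satisfy μ(i) > 0 for all i and ∑_{i∈I} μ(i) = 1, and let π₀ : A → ℝ satisfy π₀(a) > 0 for all a and ∑_{a∈A} π₀(a) = 1. Let Q : I × A → ℝ and let temperatures satisfy 0 < w' ≤ w. Then w·log(∑_{i∈I} μ(i)·exp( [w'·log(∑_{a∈A} π₀(a)·exp(Q(i,a)/w'))] / w )) ≥ w'·log(∑_{a∈A} π₀(a)·exp( [w·log(∑_{i∈I} μ(i)·exp(Q(i,a)/w))] / w' )), i.e., applying the higher-temperature mellowmax over the index set outside the lower-temperature mellowmax over actions dominates the commuted order; moreover equality holds when w = w'. -/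

import Mathlib

/-!
Put `p = w / w' ≥ 1` and `fᵢ = exp (Q i · / w)`. Then `exp (Q i a / w') = fᵢ(a) ^ p`, so the
left side is `w * log ∑ᵢ μᵢ ‖fᵢ‖` and the right side is `w * log ‖∑ᵢ μᵢ fᵢ‖`, the norm being that
of `L^p(π₀)`; the inequality is Minkowski's. For `w = w'` both sides unfold to
`w * log ∑ᵢ ∑ₐ μᵢ π₀(a) exp (Q i a / w)`.
-/

open Finset Real

lemma rpow_one_div_mul_rpow {c x p : ℝ} (hc : 0 ≤ c) (hx : 0 ≤ x) (hp : p ≠ 0) :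
    (c ^ (1 / p) * x) ^ p = c * x ^ p := by
  rw [mul_rpow (rpow_nonneg hc _) hx, ← rpow_mul hc, one_div_mul_cancel hp, rpow_one]

lemma PiLp.norm_toLp_rpow_one_div_mul {A : Type*} [Fintype A] {p : ℝ} (hp : 0 < p)
    {c g : A → ℝ} (hc : ∀ a, 0 ≤ c a) (hg : ∀ a, 0 ≤ g a) :
    ‖WithLp.toLp (ENNReal.ofReal p) (fun a => c a ^ (1 / p) * g a)‖ =
      (∑ a, c a * g a ^ p) ^ (1 / p) := by
  have hp' : (ENNReal.ofReal p).toReal = p := ENNReal.toReal_ofReal hp.le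
  rw [PiLp.norm_eq_sum (by rwa [hp']), hp']
  congr 1
  refine sum_congr rfl fun a _ => ?_
  rw [PiLp.toLp_apply, norm_of_nonneg (mul_nonneg (rpow_nonneg (hc a) _) (hg a)),
    rpow_one_div_mul_rpow (hc a) (hg a) hp.ne']

lemma weighted_Lp_norm_sum_le {ι A : Type*} [Fintype A] (s : Finset ι) {p : ℝ} (hp : 1 ≤ p)
    {c : A → ℝ} (hc : ∀ a, 0 ≤ c a) {m : ι → ℝ} (hm : ∀ i, 0 ≤ m i)
    {g : ι → A → ℝ} (hg : ∀ i a, 0 ≤ g i a) :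
    (∑ a, c a * (∑ i ∈ s, m i * g i a) ^ p) ^ (1 / p) ≤
      ∑ i ∈ s, m i * (∑ a, c a * g i a ^ p) ^ (1 / p) := by
  have hp0 : 0 < p := one_pos.trans_le hp
  have : Fact (1 ≤ ENNReal.ofReal p) := ⟨by simpa using ENNReal.ofReal_le_ofReal hp⟩
  let v : ι → PiLp (ENNReal.ofReal p) (fun _ : A => ℝ) := fun i =>
    WithLp.toLp _ (fun a => c a ^ (1 / p) * g i a)
  have hv : ∑ i ∈ s, m i • v i =
      WithLp.toLp _ (fun a => c a ^ (1 / p) * ∑ i ∈ s, m i * g i a) := by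
    ext a
    simp [v, mul_sum, mul_left_comm]
  calc (∑ a, c a * (∑ i ∈ s, m i * g i a) ^ p) ^ (1 / p)
      = ‖∑ i ∈ s, m i • v i‖ := by
        rw [hv, PiLp.norm_toLp_rpow_one_div_mul hp0 hc
          fun a => sum_nonneg fun i _ => mul_nonneg (hm i) (hg i a)]
    _ ≤ ∑ i ∈ s, ‖m i • v i‖ := norm_sum_le _ _
    _ = ∑ i ∈ s, m i * (∑ a, c a * g i a ^ p) ^ (1 / p) := by
        refine sum_congr rfl fun i _ => ?_
        rw [norm_smul, norm_of_nonneg (hm i), PiLp.norm_toLp_rpow_one_div_mul hp0 hc (hg i)]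

noncomputable def mellowmax {X : Type*} [Fintype X] (w : ℝ) (ρ : X → ℝ) (f : X → ℝ) : ℝ :=
  w * log (∑ x, ρ x * exp (f x / w))

section

variable {I A : Type*} [Fintype I] [Nonempty I] [Fintype A] [Nonempty A]
  {μ : I → ℝ} {π₀ : A → ℝ}

lemma exp_mellowmax_div (hμ : ∀ i, 0 < μ i) (f : I → ℝ) (w t : ℝ) :
    exp (mellowmax w μ f / t) = (∑ i, μ i * exp (f i / w)) ^ (w / t) := by
  have hS : 0 < ∑ i, μ i * exp (f i / w) :=
    sum_pos (fun i _ => mul_pos (hμ i) (exp_pos _)) univ_nonempty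
  rw [rpow_def_of_pos hS, mellowmax]
  congr 1
  ring

lemma mellowmax_comm (hμ : ∀ i, 0 < μ i) (hπ : ∀ a, 0 < π₀ a) (Q : I → A → ℝ)
    {w : ℝ} (hw : w ≠ 0) :
    mellowmax w π₀ (fun a => mellowmax w μ (Q · a)) =
      mellowmax w μ (fun i => mellowmax w π₀ (Q i)) := by
  rw [mellowmax, mellowmax]
  simp only [exp_mellowmax_div hμ, exp_mellowmax_div hπ, div_self hw, rpow_one, mul_sum]
  rw [sum_comm]
  simp only [mul_left_comm]

lemma mellowmax_comm_le (hμ : ∀ i, 0 < μ i) (hπ : ∀ a, 0 < π₀ a) (Q : I → A → ℝ)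
    {w w' : ℝ} (hw' : 0 < w') (hww' : w' ≤ w) :
    mellowmax w' π₀ (fun a => mellowmax w μ (Q · a)) ≤
      mellowmax w μ (fun i => mellowmax w' π₀ (Q i)) := by
  have hw : 0 < w := hw'.trans_le hww'
  set p := w / w' with hp_def
  have hp : 1 ≤ p := (one_le_div hw').2 hww'
  set f : I → A → ℝ := fun i a => exp (Q i a / w)
  have hf_rpow : ∀ i a, exp (Q i a / w') = f i a ^ p := fun i a => by
    rw [← exp_mul, hp_def]; field_simp
  have hS : 0 < ∑ a, π₀ a * (∑ i, μ i * f i a) ^ p :=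
    sum_pos (fun a _ => mul_pos (hπ a) (rpow_pos_of_pos
      (sum_pos (fun i _ => mul_pos (hμ i) (exp_pos _)) univ_nonempty) _)) univ_nonempty
  calc mellowmax w' π₀ (fun a => mellowmax w μ (Q · a))
      = w * log ((∑ a, π₀ a * (∑ i, μ i * f i a) ^ p) ^ (1 / p)) := by
        rw [mellowmax, log_rpow hS, hp_def]
        simp only [exp_mellowmax_div hμ]
        field_simp
        rfl
    _ ≤ w * log (∑ i, μ i * (∑ a, π₀ a * f i a ^ p) ^ (1 / p)) := by
        gcongr
        exact weighted_Lp_norm_sum_le univ hp (fun a => (hπ a).le) (fun i => (hμ i).le)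
          fun i a => (exp_pos _).le
    _ = mellowmax w μ (fun i => mellowmax w' π₀ (Q i)) := by
        rw [mellowmax]
        simp only [exp_mellowmax_div hπ, hf_rpow, hp_def, one_div_div]

end

theorem mellowmax_commutation_bound_general
    {I A : Type*} [Fintype I] [Nonempty I] [Fintype A] [Nonempty A]
    (μ : I → ℝ) (hμpos : ∀ i, 0 < μ i)
    (π₀ : A → ℝ) (hπpos : ∀ a, 0 < π₀ a)
    (Q : I → A → ℝ) (w w' : ℝ) (hw' : 0 < w') (hww' : w' ≤ w) :
    w * Real.log (∑ i, μ i *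
        Real.exp ((w' * Real.log (∑ a, π₀ a * Real.exp (Q i a / w'))) / w)) ≥
      w' * Real.log (∑ a, π₀ a *
        Real.exp ((w * Real.log (∑ i, μ i * Real.exp (Q i a / w))) / w')) ∧
    (w = w' →
      w * Real.log (∑ i, μ i *
          Real.exp ((w' * Real.log (∑ a, π₀ a * Real.exp (Q i a / w'))) / w)) =
        w' * Real.log (∑ a, π₀ a *
          Real.exp ((w * Real.log (∑ i, μ i * Real.exp (Q i a / w))) / w'))) := by
  refine ⟨mellowmax_comm_le hμpos hπpos Q hw' hww', ?_⟩
  rintro rfl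
  exact (mellowmax_comm hμpos hπpos Q hw'.ne').symm

/-- Applying the higher-temperature mellowmax over the ensemble index set
outside the lower-temperature mellowmax over actions dominates the commuted order,
with equality when the two temperatures coincide. -/
theorem mellowmax_commutation_bound
    {I A : Type*} [Fintype I] [Nonempty I] [Fintype A] [Nonempty A]
    (μ : I → ℝ) (hμpos : ∀ i, 0 < μ i) (hμsum : ∑ i, μ i = 1)
    (π₀ : A → ℝ) (hπpos : ∀ a, 0 < π₀ a) (hπsum : ∑ a, π₀ a = 1)
    (Q : I → A → ℝ) (w w' : ℝ) (hw' : 0 < w') (hww' : w' ≤ w) :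
    w * Real.log (∑ i, μ i *
        Real.exp ((w' * Real.log (∑ a, π₀ a * Real.exp (Q i a / w'))) / w)) ≥
      w' * Real.log (∑ a, π₀ a *
        Real.exp ((w * Real.log (∑ i, μ i * Real.exp (Q i a / w))) / w')) ∧
    (w = w' →
      w * Real.log (∑ i, μ i *
          Real.exp ((w' * Real.log (∑ a, π₀ a * Real.exp (Q i a / w'))) / w)) =
        w' * Real.log (∑ a, π₀ a *
          Real.exp ((w * Real.log (∑ i, μ i * Real.exp (Q i a / w))) / w'))) :=
  mellowmax_commutation_bound_general μ hμpos π₀ hπpos Q w w' hw' hww'
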